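/- arXiv:1812.11222 — 8 statements merged into one kernel-verified Lean document; each statement's English description precedes it below -/
import Mathlib

section
/- Let P : A → X be an order-enriched functor that is strongly order-solid. Then P is order-faithful, i.e., for all morphisms r,s : A → B in A, Pr ≤ Ps implies r ≤ s. -/
open CategoryTheory

universe w v u v' u'

/-- `P : A ⥤ X` is strongly order-solid: every (possibly large) family
`ξ i : P.obj (D i) ⟶ x` admits a universal `P`-extension `(α, a, q)` whose comparison
morphism `q` is order-`P`-epic. -/
def StronglyOrderSolid {A : Type u} [Category.{v} A] [∀ a b : A, PartialOrder (a ⟶ b)]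
    {X : Type u'} [Category.{v'} X] [∀ x y : X, PartialOrder (x ⟶ y)]
    (P : A ⥤ X) : Prop :=
  ∀ {I : Type w} (D : I → A) (x : X) (ξ : ∀ i, P.obj (D i) ⟶ x),
    ∃ (a : A) (α : ∀ i, D i ⟶ a) (q : x ⟶ P.obj a),
      (∀ i, P.map (α i) = ξ i ≫ q) ∧
      (∀ (b : A) (β : ∀ i, D i ⟶ b) (f : x ⟶ P.obj b),
        (∀ i, P.map (β i) = ξ i ≫ f) →
        ∃! t : a ⟶ b, (∀ i, α i ≫ t = β i) ∧ q ≫ P.map t = f) ∧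
      (∀ {b : A} (r s : a ⟶ b), q ≫ P.map r ≤ q ≫ P.map s → r ≤ s)

/-- `P` is order-faithful: `P r ≤ P s` implies `r ≤ s`. -/
def OrderFaithful {A : Type u} [Category.{v} A] [∀ a b : A, PartialOrder (a ⟶ b)]
    {X : Type u'} [Category.{v'} X] [∀ x y : X, PartialOrder (x ⟶ y)]
    (P : A ⥤ X) : Prop :=
  ∀ {a b : A} (r s : a ⟶ b), P.map r ≤ P.map s → r ≤ s

/-- A strongly order-solid order-enriched functor is order-faithful. -/
theorem stronglyOrderSolid_orderFaithful
    {A : Type u} [Category.{v} A] [∀ a b : A, PartialOrder (a ⟶ b)]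
    {X : Type u'} [Category.{v'} X] [∀ x y : X, PartialOrder (x ⟶ y)]
    (compMonoA : ∀ {a b c : A} (f f' : a ⟶ b) (g g' : b ⟶ c),
      f ≤ f' → g ≤ g' → f ≫ g ≤ f' ≫ g')
    (compMonoX : ∀ {x y z : X} (f f' : x ⟶ y) (g g' : y ⟶ z),
      f ≤ f' → g ≤ g' → f ≫ g ≤ f' ≫ g')
    (P : A ⥤ X)
    (Pmono : ∀ {a b : A} (f g : a ⟶ b), f ≤ g → P.map f ≤ P.map g)
    (hP : StronglyOrderSolid.{w} P) :
    OrderFaithful P := by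
  intro a b r s hrs
  obtain ⟨a', α, q, hα, huniv, hepic⟩ :=
    hP (fun _ : PUnit.{w+1} => a) (P.obj a) (fun _ => 𝟙 _)
  obtain ⟨t, ⟨ht1, ht2⟩, _⟩ :=
    huniv a (fun _ => 𝟙 a) (𝟙 _) (by intro i; simp)
  have hts : t ≫ r ≤ t ≫ s := by
    apply hepic
    have h1 : q ≫ P.map (t ≫ r) = P.map r := by
      simp [P.map_comp, ← Category.assoc, ht2]
    have h2 : q ≫ P.map (t ≫ s) = P.map s := by
      simp [P.map_comp, ← Category.assoc, ht2]
    rw [h1, h2]; exact hrs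
  have := compMonoA (α PUnit.unit) (α PUnit.unit) (t ≫ r) (t ≫ s) le_rfl hts
  simpa [← Category.assoc, ht1 PUnit.unit] using this
end

section
/- The functor S : Top₀ → Pos sending a T₀-topological space to its set of points equipped with the dual specialization order (x ≤ y iff the neighbourhood filter of x is finer than that of y, equivalently y ∈ cl{x}) is strongly order-solid. In particular, given any family of monotone maps ξ_i : S D_i → (X,≤) from T₀ spaces D_i, the topology τ on X whose open sets are exactly the down-closed subsets U ⊆ X such that ξ_i⁻¹(U) is open in D_i for every i, together with the identity map id_X : (X,≤) → S(X,τ), forms a universal S-extension: all ξ_i : D_i → (X,τ) are continuous, and for every monotone f : (X,≤) → SB with B a T₀ space such that all f∘ξ_i are continuous, f : (X,τ) → B is continuous. -/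
/-- The functor `S : Top₀ → Pos`, endowing a T₀-space with (the dual of) the
specialization order (`x ≤ y` iff `𝓝 x ≤ 𝓝 y`, i.e. `x ⤳ y`), is strongly order-solid:
given a family of maps `ξ i : S (D i) → X` into a poset `X`, monotone with respect to the
specialization orders, the topology `τ` on `X` whose open sets are exactly the down-closed
sets `U` with all preimages `ξ i ⁻¹' U` open, together with the (monotone) identity
comparison map `(X, ≤) → S (X, τ)`, forms a universal `S`-extension: all
`ξ i : D i → (X, τ)` are continuous, and any monotone `f : (X, ≤) → S B` into a T₀-space
`B` making all `f ∘ ξ i` continuous is continuous as a map `(X, τ) → B`. -/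
theorem top0_specialization_stronglyOrderSolid
    {I : Type*} (D : I → Type*) [∀ i, TopologicalSpace (D i)] [∀ i, T0Space (D i)]
    (X : Type*) [PartialOrder X]
    (ξ : ∀ i, D i → X) (hξ : ∀ i, ∀ x y : D i, x ⤳ y → ξ i x ≤ ξ i y) :
    ∃ τ : TopologicalSpace X,
      -- the open sets of τ are exactly the down-closed sets with all ξ-preimages open
      (∀ U : Set X, τ.IsOpen U ↔ (IsLowerSet U ∧ ∀ i, IsOpen (ξ i ⁻¹' U))) ∧
      -- the comparison map id : (X, ≤) → S (X, τ) is monotone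
      (∀ x y : X, x ≤ y → @Specializes X τ x y) ∧
      -- the maps ξ i : D i → (X, τ) are continuous
      (∀ i, @Continuous (D i) X _ τ (ξ i)) ∧
      -- universality
      (∀ (B : Type*) [TopologicalSpace B] [T0Space B] (f : X → B),
        (∀ x y : X, x ≤ y → f x ⤳ f y) →
        (∀ i, Continuous (f ∘ ξ i)) → @Continuous X B τ _ f) := by
  refine ⟨{ IsOpen := fun U => IsLowerSet U ∧ ∀ i, IsOpen (ξ i ⁻¹' U)
            isOpen_univ := ⟨isLowerSet_univ, fun i => by simp⟩
            isOpen_inter := fun U V hU hV =>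
              ⟨hU.1.inter hV.1, fun i => by
                rw [Set.preimage_inter]; exact (hU.2 i).inter (hV.2 i)⟩
            isOpen_sUnion := fun S hS =>
              ⟨isLowerSet_sUnion fun s hs => (hS s hs).1, fun i => by
                rw [Set.preimage_sUnion]
                exact isOpen_biUnion fun s hs => (hS s hs).2 i⟩ }, fun U => Iff.rfl,
          ?_, ?_, ?_⟩
  · intro x y hxy
    rw [@specializes_iff_forall_open]
    intro U hU hyU
    exact hU.1 hxy hyU
  · intro i
    rw [continuous_def]
    intro U hU
    exact hU.2 i
  · intro B _ _ f hf hcont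
    rw [continuous_def]
    intro V hV
    refine ⟨fun x y hxy hyV => (specializes_iff_forall_open.mp (hf y x hxy) V hV hyV), fun i => ?_⟩
    exact (hcont i).isOpen_preimage V hV
end

section
/- Let H be the free ordered vector space on the 2-chain {a < b} (i.e., the left adjoint of the forgetful functor from ordered vector spaces with order-preserving linear maps to Pos, applied to the 2-chain). Then the unit X → RHX is not order-R-epic: there exist order-preserving linear maps f♯, g♯ : HX → ℝ induced by monotone maps f,g : {a<b} → ℝ with f(a)=0 < g(a)=2, f(b)=2 < g(b)=3, such that f ≤ g pointwise on {a,b} but f♯(b−a) = 2 > 1 = g♯(b−a), so f♯ ≤ g♯ fails. -/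
/-- The order on the free ordered vector space `H{a<b}` on the 2-chain `{a < b}`:
realizing `H{a<b}` as `ℝ × ℝ` with basis vectors `a = (1,0)`, `b = (0,1)`, the least
vector-space-compatible preorder generated by `a ≤ b` is
`u ≤ v ↔ ∃ λ ≥ 0, v - u = λ • (b - a)`. -/
def chainTwoFreeLe (u v : ℝ × ℝ) : Prop :=
  ∃ lam : ℝ, 0 ≤ lam ∧ v - u = lam • (((0 : ℝ), (1 : ℝ)) - ((1 : ℝ), (0 : ℝ)))

/-- The unit of the free ordered vector space `H` on the 2-chain `{a < b}` fails to be
order-`R`-epic: `chainTwoFreeLe` is a vector-space-compatible preorder with `a ≤ b`, and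
there are order-preserving linear maps `f♯, g♯ : H → ℝ` induced by the monotone maps
`f, g : {a < b} → ℝ` with `f a = 0 < g a = 2` and `f b = 2 < g b = 3` (so `f ≤ g`
pointwise on `{a, b}`), but `f♯ (b - a) = 2 > 1 = g♯ (b - a)`, so `f♯ ≤ g♯` fails. -/
theorem freeOrderedVectorSpace_unit_not_orderEpic :
    -- chainTwoFreeLe is a preorder ...
    Reflexive chainTwoFreeLe ∧ Transitive chainTwoFreeLe ∧
    -- ... compatible with the vector space structure ...
    (∀ (u v w : ℝ × ℝ) (lam : ℝ), 0 ≤ lam → chainTwoFreeLe u v →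
      chainTwoFreeLe (lam • u + w) (lam • v + w)) ∧
    -- ... generated by a ≤ b
    chainTwoFreeLe ((1 : ℝ), (0 : ℝ)) ((0 : ℝ), (1 : ℝ)) ∧
    -- the counterexample
    ∃ f g : (ℝ × ℝ) →ₗ[ℝ] ℝ,
      (∀ u v : ℝ × ℝ, chainTwoFreeLe u v → f u ≤ f v) ∧
      (∀ u v : ℝ × ℝ, chainTwoFreeLe u v → g u ≤ g v) ∧
      f ((1 : ℝ), (0 : ℝ)) = 0 ∧ g ((1 : ℝ), (0 : ℝ)) = 2 ∧
      f ((0 : ℝ), (1 : ℝ)) = 2 ∧ g ((0 : ℝ), (1 : ℝ)) = 3 ∧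
      f ((1 : ℝ), (0 : ℝ)) ≤ g ((1 : ℝ), (0 : ℝ)) ∧
      f ((0 : ℝ), (1 : ℝ)) ≤ g ((0 : ℝ), (1 : ℝ)) ∧
      f ((((0 : ℝ), (1 : ℝ)) : ℝ × ℝ) - ((1 : ℝ), (0 : ℝ))) = 2 ∧
      g ((((0 : ℝ), (1 : ℝ)) : ℝ × ℝ) - ((1 : ℝ), (0 : ℝ))) = 1 ∧
      ¬ (∀ u : ℝ × ℝ, f u ≤ g u) := by
  refine ⟨fun u => ⟨0, le_refl 0, by simp⟩,
    fun u v w ⟨l, hl, he⟩ ⟨m, hm, hf⟩ => ⟨l + m, by positivity, by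
      rw [add_smul, ← he, ← hf]; abel⟩,
    fun u v w lam hlam ⟨l, hl, he⟩ => ⟨lam * l, by positivity, by
      rw [mul_smul, ← he, smul_sub]; abel⟩,
    ⟨1, zero_le_one, by norm_num⟩, ?_⟩
  refine ⟨(2 : ℝ) • LinearMap.snd ℝ ℝ ℝ,
    (2 : ℝ) • LinearMap.fst ℝ ℝ ℝ + (3 : ℝ) • LinearMap.snd ℝ ℝ ℝ, ?_, ?_, ?_⟩
  · rintro u v ⟨l, hl, he⟩
    have : v.2 - u.2 = l := by have := congrArg Prod.snd he; simpa using this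
    simp only [LinearMap.smul_apply, LinearMap.snd_apply, smul_eq_mul]
    nlinarith
  · rintro u v ⟨l, hl, he⟩
    have h1 : v.1 - u.1 = -l := by have := congrArg Prod.fst he; simpa using this
    have h2 : v.2 - u.2 = l := by have := congrArg Prod.snd he; simpa using this
    simp only [LinearMap.add_apply, LinearMap.smul_apply, LinearMap.fst_apply,
      LinearMap.snd_apply, smul_eq_mul]
    nlinarith
  refine ⟨by simp, by norm_num, by simp, by norm_num, by norm_num, by norm_num,
    by norm_num, by norm_num, fun h => ?_⟩
  have := h (((0 : ℝ), (1 : ℝ)) - ((1 : ℝ), (0 : ℝ)))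
  norm_num [Prod.sub_def] at this
end

section
/- Let P : A → X be an order-enriched functor, D : D → A an order-enriched diagram, W : D^op → Pos a weight, and let ξ : PD → X be a W-weighted colimit of P∘D in X. If (α : D → A, q : X → PA) is an order-universal P-extension of ξ, then α is a W-weighted colimit of D in A. -/
open CategoryTheory Opposite

universe w v₂ u₂ v u v' u'

/-- A `W`-weighted cocone over an order-enriched diagram `F : D ⥤ C` with weight
`W : Dᵒᵖ ⥤ Pos`: a natural transformation `W ⟶ C(F -, pt)`. -/
structure WeightedCocone {C : Type u} [Category.{v} C] [∀ a b : C, PartialOrder (a ⟶ b)]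
    {D : Type u₂} [Category.{v₂} D] (W : Dᵒᵖ ⥤ PartOrd.{w}) (F : D ⥤ C) where
  pt : C
  leg : ∀ i : D, W.obj (op i) → (F.obj i ⟶ pt)
  leg_mono : ∀ i : D, Monotone (leg i)
  leg_nat : ∀ {i j : D} (d : i ⟶ j) (v : W.obj (op j)),
    F.map d ≫ leg j v = leg i ((W.map d.op).hom.toFun v)

/-- A weighted cocone is a weighted colimit if it is universal among weighted cocones
and order-epic. -/
def IsWeightedColimit {C : Type u} [Category.{v} C] [∀ a b : C, PartialOrder (a ⟶ b)]
    {D : Type u₂} [Category.{v₂} D] {W : Dᵒᵖ ⥤ PartOrd.{w}} {F : D ⥤ C}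
    (α : WeightedCocone W F) : Prop :=
  (∀ β : WeightedCocone W F, ∃! t : α.pt ⟶ β.pt, ∀ (i : D) (u : W.obj (op i)),
    α.leg i u ≫ t = β.leg i u) ∧
  (∀ {z : C} (r s : α.pt ⟶ z),
    (∀ (i : D) (u : W.obj (op i)), α.leg i u ≫ r ≤ α.leg i u ≫ s) → r ≤ s)

/-- `(α, q)` is an order-universal `P`-extension of the weighted cocone `ξ` over `F ⋙ P`. -/
def IsOrderUniversalExtension {A : Type u} [Category.{v} A] [∀ a b : A, PartialOrder (a ⟶ b)]
    {X : Type u'} [Category.{v'} X] [∀ x y : X, PartialOrder (x ⟶ y)]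
    (P : A ⥤ X) {D : Type u₂} [Category.{v₂} D] {W : Dᵒᵖ ⥤ PartOrd.{w}} {F : D ⥤ A}
    (ξ : WeightedCocone W (F ⋙ P)) (α : WeightedCocone W F)
    (q : ξ.pt ⟶ P.obj α.pt) : Prop :=
  (∀ (i : D) (u : W.obj (op i)), P.map (α.leg i u) = ξ.leg i u ≫ q) ∧
  (∀ (β : WeightedCocone W F) (f : ξ.pt ⟶ P.obj β.pt),
    (∀ (i : D) (u : W.obj (op i)), P.map (β.leg i u) = ξ.leg i u ≫ f) →
    ∃! t : α.pt ⟶ β.pt,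
      (∀ (i : D) (u : W.obj (op i)), α.leg i u ≫ t = β.leg i u) ∧ q ≫ P.map t = f) ∧
  (∀ {z : A} (r s : α.pt ⟶ z), q ≫ P.map r ≤ q ≫ P.map s →
    (∀ (i : D) (u : W.obj (op i)), α.leg i u ≫ r ≤ α.leg i u ≫ s) → r ≤ s)

/-!
Push a cocone `β` over `F` forward along `P`. The colimit `ξ` yields a comparison
`f : ξ.pt ⟶ P β.pt`, and the universal property of the extension turns `(β, f)` into a
factorization through `α`; any factorization `t` through `α` makes `q ≫ P t` a factorization
through `ξ`, hence equal to `f`, which gives uniqueness. For order-epicness, an inequality on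
the legs of `α` is carried by `P` to the legs of `ξ`, so `ξ` being order-epic compares
`q ≫ P r` with `q ≫ P s`, and the order-universality of `(α, q)` finishes.
-/

namespace WeightedCocone

variable {A : Type u} [Category.{v} A] [∀ a b : A, PartialOrder (a ⟶ b)]
  {X : Type u'} [Category.{v'} X] [∀ x y : X, PartialOrder (x ⟶ y)]
  {D : Type u₂} [Category.{v₂} D] {W : Dᵒᵖ ⥤ PartOrd.{w}} {F : D ⥤ A}

def map (P : A ⥤ X) (hP : ∀ {a b : A} (f g : a ⟶ b), f ≤ g → P.map f ≤ P.map g)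
    (β : WeightedCocone W F) : WeightedCocone W (F ⋙ P) where
  pt := P.obj β.pt
  leg i u := P.map (β.leg i u)
  leg_mono i _ _ huv := hP _ _ (β.leg_mono i huv)
  leg_nat d v := by simp only [Functor.comp_map, ← P.map_comp, β.leg_nat]

end WeightedCocone

namespace IsOrderUniversalExtension

variable {A : Type u} [Category.{v} A] [∀ a b : A, PartialOrder (a ⟶ b)]
  {X : Type u'} [Category.{v'} X] [∀ x y : X, PartialOrder (x ⟶ y)]
  {P : A ⥤ X} {D : Type u₂} [Category.{v₂} D] {W : Dᵒᵖ ⥤ PartOrd.{w}} {F : D ⥤ A}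
  {ξ : WeightedCocone W (F ⋙ P)} {α : WeightedCocone W F} {q : ξ.pt ⟶ P.obj α.pt}

lemma leg_comp_map (h : IsOrderUniversalExtension P ξ α q) {b : A} (t : α.pt ⟶ b)
    (i : D) (u : W.obj (op i)) : ξ.leg i u ≫ q ≫ P.map t = P.map (α.leg i u ≫ t) := by
  rw [← Category.assoc, ← h.1 i u, P.map_comp]

lemma existsUnique_desc (h : IsOrderUniversalExtension P ξ α q)
    (hP : ∀ {a b : A} (f g : a ⟶ b), f ≤ g → P.map f ≤ P.map g)
    (hξ : IsWeightedColimit ξ) (β : WeightedCocone W F) :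
    ∃! t : α.pt ⟶ β.pt, ∀ (i : D) (u : W.obj (op i)), α.leg i u ≫ t = β.leg i u := by
  obtain ⟨f, hf, hf_unique⟩ := hξ.1 (β.map P hP)
  obtain ⟨t, ⟨ht, -⟩, ht_unique⟩ := h.2.1 β f fun i u => (hf i u).symm
  refine ⟨t, ht, fun t' ht' => ht_unique t' ⟨ht', hf_unique _ fun i u => ?_⟩⟩
  exact (h.leg_comp_map t' i u).trans (congrArg P.map (ht' i u))

lemma le_of_leg_comp_le (h : IsOrderUniversalExtension P ξ α q)
    (hP : ∀ {a b : A} (f g : a ⟶ b), f ≤ g → P.map f ≤ P.map g)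
    (hξ : IsWeightedColimit ξ) {z : A} (r s : α.pt ⟶ z)
    (hrs : ∀ (i : D) (u : W.obj (op i)), α.leg i u ≫ r ≤ α.leg i u ≫ s) : r ≤ s := by
  refine h.2.2 r s (hξ.2 _ _ fun i u => ?_) hrs
  rw [h.leg_comp_map, h.leg_comp_map]
  exact hP _ _ (hrs i u)

end IsOrderUniversalExtension

/-- If `ξ` is a `W`-weighted colimit of `F ⋙ P` and `(α, q)` is an order-universal
`P`-extension of `ξ`, then `α` is a `W`-weighted colimit of `F`. -/
theorem isWeightedColimit_of_orderUniversalExtension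
    {A : Type u} [Category.{v} A] [∀ a b : A, PartialOrder (a ⟶ b)]
    {X : Type u'} [Category.{v'} X] [∀ x y : X, PartialOrder (x ⟶ y)]
    (compMonoA : ∀ {a b c : A} (f f' : a ⟶ b) (g g' : b ⟶ c),
      f ≤ f' → g ≤ g' → f ≫ g ≤ f' ≫ g')
    (compMonoX : ∀ {x y z : X} (f f' : x ⟶ y) (g g' : y ⟶ z),
      f ≤ f' → g ≤ g' → f ≫ g ≤ f' ≫ g')
    (P : A ⥤ X)
    (Pmono : ∀ {a b : A} (f g : a ⟶ b), f ≤ g → P.map f ≤ P.map g)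
    {D : Type u₂} [Category.{v₂} D] {W : Dᵒᵖ ⥤ PartOrd.{w}} {F : D ⥤ A}
    (ξ : WeightedCocone W (F ⋙ P)) (hξ : IsWeightedColimit ξ)
    (α : WeightedCocone W F) (q : ξ.pt ⟶ P.obj α.pt)
    (h : IsOrderUniversalExtension P ξ α q) :
    IsWeightedColimit α :=
  ⟨h.existsUnique_desc Pmono hξ, fun r s => h.le_of_leg_comp_le Pmono hξ r s⟩
end

section
/- Let P : A → X be an order-enriched functor, ξ : PD → X a W-weighted colimit of P∘D in X, and α : D → A a W-weighted colimit of D in A. Then (α, A, q), where q : X → PA is the comparison morphism induced by the colimit property of ξ applied to Pα, is an order-universal P-extension of ξ. -/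
/-!
The mediating morphism `t : α.pt ⟶ β.pt` of a `P`-extension `(β, f)` is the one given by the
universality of `α`. It also satisfies `q ≫ P t = f`, because both sides agree after
precomposition with every leg of `ξ`, and the legs of the order-epic cocone `ξ` are jointly
epic. Joint order-`P`-epicness is inherited from the order-epicness of `α`.
-/

open CategoryTheory Opposite

universe w v₂ u₂ v u v' u'

namespace IsWeightedColimit

variable {C : Type u} [Category.{v} C] [∀ a b : C, PartialOrder (a ⟶ b)]
  {D : Type u₂} [Category.{v₂} D] {W : Dᵒᵖ ⥤ PartOrd.{w}} {F : D ⥤ C}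
  {α : WeightedCocone W F}

theorem le_of_leg_comp_le (hα : IsWeightedColimit α) {z : C} (r s : α.pt ⟶ z)
    (h : ∀ (i : D) (u : W.obj (op i)), α.leg i u ≫ r ≤ α.leg i u ≫ s) : r ≤ s :=
  hα.2 r s h

theorem hom_ext (hα : IsWeightedColimit α) {z : C} {r s : α.pt ⟶ z}
    (h : ∀ (i : D) (u : W.obj (op i)), α.leg i u ≫ r = α.leg i u ≫ s) : r = s :=
  le_antisymm (hα.le_of_leg_comp_le r s fun i u => (h i u).le)
    (hα.le_of_leg_comp_le s r fun i u => (h i u).ge)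

theorem existsUnique_desc (hα : IsWeightedColimit α) (β : WeightedCocone W F) :
    ∃! t : α.pt ⟶ β.pt, ∀ (i : D) (u : W.obj (op i)), α.leg i u ≫ t = β.leg i u :=
  hα.1 β

end IsWeightedColimit

/-- If `ξ` is a `W`-weighted colimit of `F ⋙ P` and `α` is a `W`-weighted colimit of `F`,
then `α` together with the comparison morphism `q` induced by the colimit property of `ξ`
(characterized by `P (α.leg i u) = ξ.leg i u ≫ q`) is an order-universal `P`-extension
of `ξ`. -/
theorem orderUniversalExtension_of_isWeightedColimit
    {A : Type u} [Category.{v} A] [∀ a b : A, PartialOrder (a ⟶ b)]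
    {X : Type u'} [Category.{v'} X] [∀ x y : X, PartialOrder (x ⟶ y)]
    (compMonoA : ∀ {a b c : A} (f f' : a ⟶ b) (g g' : b ⟶ c),
      f ≤ f' → g ≤ g' → f ≫ g ≤ f' ≫ g')
    (compMonoX : ∀ {x y z : X} (f f' : x ⟶ y) (g g' : y ⟶ z),
      f ≤ f' → g ≤ g' → f ≫ g ≤ f' ≫ g')
    (P : A ⥤ X)
    (Pmono : ∀ {a b : A} (f g : a ⟶ b), f ≤ g → P.map f ≤ P.map g)
    {D : Type u₂} [Category.{v₂} D] {W : Dᵒᵖ ⥤ PartOrd.{w}} {F : D ⥤ A}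
    (ξ : WeightedCocone W (F ⋙ P)) (hξ : IsWeightedColimit ξ)
    (α : WeightedCocone W F) (hα : IsWeightedColimit α)
    (q : ξ.pt ⟶ P.obj α.pt)
    (hq : ∀ (i : D) (u : W.obj (op i)), P.map (α.leg i u) = ξ.leg i u ≫ q) :
    IsOrderUniversalExtension P ξ α q := by
  refine ⟨hq, fun β f hf => ?_, fun r s _ hleg => hα.le_of_leg_comp_le r s hleg⟩
  obtain ⟨t, ht, ht_unique⟩ := hα.existsUnique_desc β
  have hqt : q ≫ P.map t = f := hξ.hom_ext fun i u => by
    rw [← Category.assoc, ← hq, ← hf, ← P.map_comp, ht]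
  exact ⟨t, ⟨ht, hqt⟩, fun t' ht' => ht_unique t' ht'.1⟩
end

section
/- In an order-enriched category A with conical binary coproducts and co-inserters, cocomma objects exist: for f : A → B and g : A → C, forming the coproduct B + C with injections i, j and then the co-inserter c : B + C → D of the pair (i∘f, j∘g) yields a cocomma object (p = c∘i, q = c∘j) of (f, g). -/
open CategoryTheory

universe v u

section Defs

variable {A : Type u} [Category.{v} A] [∀ a b : A, PartialOrder (a ⟶ b)]

/-- `e : b ⟶ c` is a co-inserter of the parallel pair `u, v : a ⟶ b`:
`u ≫ e ≤ v ≫ e`, universal with this property, and order-epic. -/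
def IsCoinserter {a b c : A} (u v : a ⟶ b) (e : b ⟶ c) : Prop :=
  u ≫ e ≤ v ≫ e ∧
  (∀ {z : A} (h : b ⟶ z), u ≫ h ≤ v ≫ h → ∃! t : c ⟶ z, e ≫ t = h) ∧
  (∀ {z : A} (r s : c ⟶ z), e ≫ r ≤ e ≫ s → r ≤ s)

/-- `(p, q)` is a cocomma object of `(f : a ⟶ b, g : a ⟶ c)`: `f ≫ p ≤ g ≫ q`,
universal with this property, and jointly order-epic. -/
def IsCocomma {a b c d : A} (f : a ⟶ b) (g : a ⟶ c) (p : b ⟶ d) (q : c ⟶ d) : Prop :=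
  f ≫ p ≤ g ≫ q ∧
  (∀ {z : A} (k : b ⟶ z) (l : c ⟶ z), f ≫ k ≤ g ≫ l →
    ∃! t : d ⟶ z, p ≫ t = k ∧ q ≫ t = l) ∧
  (∀ {z : A} (r s : d ⟶ z), p ≫ r ≤ p ≫ s → q ≫ r ≤ q ≫ s → r ≤ s)

/-- `(i, j)` is a conical binary coproduct of `b` and `c`: an ordinary coproduct whose
cocone is jointly order-epic. -/
def IsConicalCoproduct {b c s : A} (i : b ⟶ s) (j : c ⟶ s) : Prop :=
  (∀ {z : A} (k : b ⟶ z) (l : c ⟶ z), ∃! t : s ⟶ z, i ≫ t = k ∧ j ≫ t = l) ∧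
  (∀ {z : A} (r r' : s ⟶ z), i ≫ r ≤ i ≫ r' → j ≫ r ≤ j ≫ r' → r ≤ r')

end Defs

/-- In an order-enriched category, cocomma objects can be constructed from conical binary
coproducts and co-inserters: given `f : a ⟶ b`, `g : a ⟶ c`, a conical coproduct
`(i : b ⟶ s, j : c ⟶ s)` and a co-inserter `e : s ⟶ d` of `(f ≫ i, g ≫ j)`, the pair
`(i ≫ e, j ≫ e)` is a cocomma object of `(f, g)`. -/
theorem isCocomma_of_coproduct_coinserter
    {A : Type u} [Category.{v} A] [∀ a b : A, PartialOrder (a ⟶ b)]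
    (compMono : ∀ {a b c : A} (f f' : a ⟶ b) (g g' : b ⟶ c),
      f ≤ f' → g ≤ g' → f ≫ g ≤ f' ≫ g')
    {a b c s d : A} (f : a ⟶ b) (g : a ⟶ c)
    (i : b ⟶ s) (j : c ⟶ s) (hco : IsConicalCoproduct i j)
    (e : s ⟶ d) (he : IsCoinserter (f ≫ i) (g ≫ j) e) :
    IsCocomma f g (i ≫ e) (j ≫ e) := by
  obtain ⟨hle, huniv, hepi⟩ := he
  obtain ⟨cuniv, cepi⟩ := hco
  refine ⟨by simpa using hle, ?_, ?_⟩
  · intro z k l hkl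
    obtain ⟨m, ⟨hmi, hmj⟩, hmu⟩ := cuniv k l
    have hm : (f ≫ i) ≫ m ≤ (g ≫ j) ≫ m := by
      rw [Category.assoc, Category.assoc, hmi, hmj]; exact hkl
    obtain ⟨t, ht, htu⟩ := huniv m hm
    refine ⟨t, ⟨?_, ?_⟩, ?_⟩
    · rw [Category.assoc, ht, hmi]
    · rw [Category.assoc, ht, hmj]
    · intro t' ⟨h1, h2⟩
      apply htu
      exact hmu (e ≫ t') ⟨by rw [← Category.assoc]; exact h1,
        by rw [← Category.assoc]; exact h2⟩
  · intro z r s' h1 h2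
    apply hepi
    exact cepi _ _ (by simpa using h1) (by simpa using h2)
end

section
/- In an order-enriched category A with cocomma objects and conical coequalizers, co-inserters exist: for a parallel pair f, g : A → B, forming the cocomma object (p, q : B → D) of the span (f, g) (i.e., of f : A → B and g : A → B) and then the conical coequalizer e : D → C of (p, q) yields a co-inserter e∘p : B → C of (f, g). -/
open CategoryTheory

universe v u

section Defs

variable {A : Type u} [Category.{v} A] [∀ a b : A, PartialOrder (a ⟶ b)]

/-- `e : d ⟶ c` is a conical coequalizer of `p, q : b ⟶ d`: an ordinary coequalizer
whose defining morphism is order-epic. -/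
def IsConicalCoequalizer {b d c : A} (p q : b ⟶ d) (e : d ⟶ c) : Prop :=
  p ≫ e = q ≫ e ∧
  (∀ {z : A} (h : d ⟶ z), p ≫ h = q ≫ h → ∃! t : c ⟶ z, e ≫ t = h) ∧
  (∀ {z : A} (r s : c ⟶ z), e ≫ r ≤ e ≫ s → r ≤ s)

end Defs

/-- In an order-enriched category, co-inserters can be constructed from cocomma objects
and conical coequalizers: given a parallel pair `f, g : a ⟶ b`, a cocomma object
`(p, q : b ⟶ d)` of the span `(f, g)` and a conical coequalizer `e : d ⟶ c` of `(p, q)`,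
the composite `p ≫ e : b ⟶ c` is a co-inserter of `(f, g)`. -/
theorem isCoinserter_of_cocomma_coequalizer
    {A : Type u} [Category.{v} A] [∀ a b : A, PartialOrder (a ⟶ b)]
    (compMono : ∀ {a b c : A} (f f' : a ⟶ b) (g g' : b ⟶ c),
      f ≤ f' → g ≤ g' → f ≫ g ≤ f' ≫ g')
    {a b d c : A} (f g : a ⟶ b)
    (p q : b ⟶ d) (hpq : IsCocomma f g p q)
    (e : d ⟶ c) (he : IsConicalCoequalizer p q e) :
    IsCoinserter f g (p ≫ e) := by

  obtain ⟨hle, huniv, hepi⟩ := hpq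
  obtain ⟨heq, euniv, eepi⟩ := he
  refine ⟨?_, ?_, ?_⟩
  · calc f ≫ p ≫ e = (f ≫ p) ≫ e := by rw [Category.assoc]
      _ ≤ (g ≫ q) ≫ e := compMono _ _ _ _ hle le_rfl
      _ = g ≫ q ≫ e := by rw [Category.assoc]
      _ = g ≫ p ≫ e := by rw [heq]
  · intro z h hh
    obtain ⟨t, ⟨htp, htq⟩, htuniq⟩ := huniv h h hh
    obtain ⟨s, hs, hsuniq⟩ := euniv t (by rw [htp, htq])
    refine ⟨s, ?_, ?_⟩
    · show (p ≫ e) ≫ s = h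
      rw [Category.assoc, hs, htp]
    · intro s' hs'
      have h1 : p ≫ (e ≫ s') = h := by rw [← Category.assoc]; exact hs'
      have h2 : q ≫ (e ≫ s') = h := by rw [← Category.assoc, ← heq, Category.assoc]; exact h1
      exact hsuniq s' (htuniq _ ⟨h1, h2⟩)
  · intro z r s hrs
    have h1 : p ≫ e ≫ r ≤ p ≫ e ≫ s := by simp only [← Category.assoc]; exact hrs
    have h2 : q ≫ e ≫ r ≤ q ≫ e ≫ s := by
      simp only [← Category.assoc, ← heq]; exact hrs
    exact eepi r s (hepi _ _ h1 h2)
end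

section
/- The tensor product W ⊗ A in an order-enriched category A can be constructed from conical copowers and co-inserters: writing the order of the poset W as a subset W₁ ⊆ W₀ × W₀ (W₀ the underlying set of W) with projections d₁, d₂ : W₁ → W₀, if the conical copowers W₁ ⊗ A and W₀ ⊗ A (copowers by discrete sets) exist and the co-inserter of the induced pair d₁ ⊗ A, d₂ ⊗ A : W₁ ⊗ A → W₀ ⊗ A exists, then this co-inserter is a tensor product W ⊗ A. -/
open CategoryTheory

universe w v u

section Defs

variable {A : Type u} [Category.{v} A] [∀ a b : A, PartialOrder (a ⟶ b)]

/-- `ι : S → (a ⟶ s)` exhibits `s` as a conical copower of `a` by the (discrete) set `S`: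
an ordinary copower whose cocone of injections is jointly order-epic. -/
def IsConicalCopower {S : Type w} (a : A) {s : A} (ι : S → (a ⟶ s)) : Prop :=
  (∀ {z : A} (k : S → (a ⟶ z)), ∃! t : s ⟶ z, ∀ x : S, ι x ≫ t = k x) ∧
  (∀ {z : A} (r r' : s ⟶ z), (∀ x : S, ι x ≫ r ≤ ι x ≫ r') → r ≤ r')

/-- `λ : W → (a ⟶ t)` exhibits `t` as a tensor product `W ⊗ a` of the object `a` with
the poset `W`: the monotone cocone `lam` is universal among monotone cocones and
order-epic, which amounts to natural order-isomorphisms `A(W ⊗ a, z) ≅ Pos(W, A(a, z))`. -/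
def IsOrderTensorProduct {W : Type w} [PartialOrder W] (a : A) {t : A}
    (lam : W → (a ⟶ t)) : Prop :=
  Monotone lam ∧
  (∀ {z : A} (k : W → (a ⟶ z)), Monotone k → ∃! h : t ⟶ z, ∀ w : W, lam w ≫ h = k w) ∧
  (∀ {z : A} (r s : t ⟶ z), (∀ w : W, lam w ≫ r ≤ lam w ≫ s) → r ≤ s)

end Defs

/-- The tensor product `W ⊗ a` in an order-enriched category can be constructed from
conical copowers and co-inserters: write the order of `W` as
`W₁ = {p : W × W // p.1 ≤ p.2} ⊆ W₀ × W₀` with the two projections; given conical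
copowers `c₁ = W₁ ⊗ a` (injections `ι₁`) and `c₀ = W₀ ⊗ a` (injections `ι₀`), the
induced morphisms `d₁, d₂ : c₁ ⟶ c₀` (with `ι₁ p ≫ dₖ = ι₀ (projₖ p)`), and a
co-inserter `e : c₀ ⟶ t` of `(d₁, d₂)`, the cocone `w ↦ ι₀ w ≫ e` exhibits `t` as the
tensor product `W ⊗ a`. -/
theorem isOrderTensorProduct_of_copowers_coinserter
    {A : Type u} [Category.{v} A] [∀ a b : A, PartialOrder (a ⟶ b)]
    (compMono : ∀ {a b c : A} (f f' : a ⟶ b) (g g' : b ⟶ c),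
      f ≤ f' → g ≤ g' → f ≫ g ≤ f' ≫ g')
    {W : Type w} [PartialOrder W] (a : A)
    {c₀ c₁ t : A} (ι₀ : W → (a ⟶ c₀))
    (ι₁ : {p : W × W // p.1 ≤ p.2} → (a ⟶ c₁))
    (h₀ : IsConicalCopower a ι₀) (h₁ : IsConicalCopower a ι₁)
    (d₁ d₂ : c₁ ⟶ c₀)
    (hd₁ : ∀ p : {p : W × W // p.1 ≤ p.2}, ι₁ p ≫ d₁ = ι₀ p.1.1)
    (hd₂ : ∀ p : {p : W × W // p.1 ≤ p.2}, ι₁ p ≫ d₂ = ι₀ p.1.2)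
    (e : c₀ ⟶ t) (he : IsCoinserter d₁ d₂ e) :
    IsOrderTensorProduct a (fun w : W => ι₀ w ≫ e) := by
  obtain ⟨he1, he2, he3⟩ := he
  refine ⟨?_, ?_, ?_⟩
  · intro w w' hww'
    have : ι₁ ⟨(w, w'), hww'⟩ ≫ (d₁ ≫ e) ≤ ι₁ ⟨(w, w'), hww'⟩ ≫ (d₂ ≫ e) :=
      compMono _ _ _ _ le_rfl he1
    simpa [← Category.assoc, hd₁, hd₂] using this
  · intro z k hk
    obtain ⟨h, hh, hhu⟩ := h₀.1 k
    have hle : d₁ ≫ h ≤ d₂ ≫ h := by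
      apply h₁.2
      intro p
      rw [← Category.assoc, ← Category.assoc, hd₁, hd₂, hh, hh]
      exact hk p.2
    obtain ⟨t', ht', ht'u⟩ := he2 h hle
    refine ⟨t', fun w => by rw [Category.assoc, ht', hh], ?_⟩
    intro t'' ht''
    apply ht'u
    apply hhu
    intro x
    rw [← Category.assoc]
    exact ht'' x
  · intro z r s hrs
    apply he3
    apply h₀.2
    intro x
    simpa using hrs x
end
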